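/- arXiv:1911.00207 — 2 statements merged into one kernel-verified Lean document; each statement's English description precedes it below -/
import Mathlib

section
/- Any matroid M on the edge set of the complete graph K_n (n ≥ d + 2) in which the edge set of every copy of K_{d+2} is a circuit has rank at most dn − binom(d+1, 2). -/
open Set Matroid

variable {α : Type*}

/-- A circuit of a matroid: a minimal dependent subset of the ground set. -/
def IsCircuit (M : Matroid α) (C : Set α) : Prop :=
  C ⊆ M.E ∧ ¬ M.Indep C ∧ ∀ e ∈ C, M.Indep (C \ {e})

/-- The (natural-number) rank of a set in a matroid: the size of a largest
independent subset. -/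
noncomputable def nr (M : Matroid α) (X : Set α) : ℕ :=
  sSup {k | ∃ I, I ⊆ X ∧ M.Indep I ∧ I.ncard = k}

/-- The rank of a matroid. -/
noncomputable def mrk (M : Matroid α) : ℕ := nr M M.E

/-- A cyclic set: a (possibly empty) union of circuits. -/
def Cyclic (M : Matroid α) (X : Set α) : Prop :=
  X ⊆ M.E ∧ ∀ e ∈ X, ∃ C, _root_.IsCircuit M C ∧ C ⊆ X ∧ e ∈ C

/-- A modular pair of sets in a matroid. -/
def ModPair (M : Matroid α) (X Y : Set α) : Prop :=
  nr M X + nr M Y = nr M (X ∩ Y) + nr M (X ∪ Y)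

/-- A coloop of a matroid: an element contained in every base. -/
def IsColoop (M : Matroid α) (e : α) : Prop := ∀ B, M.IsBase B → e ∈ B

/-- The edges of the complete graph on a vertex set `X`. -/
def edgesOn {V : Type*} (X : Set V) : Set (Sym2 V) :=
  {e | ¬ e.IsDiag ∧ ∀ v ∈ e, v ∈ X}

/-- The set of vertices incident to an edge set. -/
def verts {V : Type*} (F : Set (Sym2 V)) : Set V := {v | ∃ e ∈ F, v ∈ e}

/-- The degree of a vertex in an edge set. -/
noncomputable def edeg {V : Type*} (F : Set (Sym2 V)) (v : V) : ℕ :=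
  {e ∈ F | v ∈ e}.ncard

/-! Adding a vertex `v` to a vertex set `Y` with `|Y| ≥ d + 1` raises the rank of the clique
by at most `d`: fix a `d`-subset `W ⊆ Y`; for `b ∈ Y \ W` the clique on `{v, b} ∪ W` is a
circuit, so the edge `vb` is spanned by the edges of `Y` together with the `d` edges from `v`
to `W`. Starting from a clique on `d + 1` vertices, of rank at most `binom(d+1, 2)`, induction
on the number of vertices gives `r(K_n) ≤ binom(d+1, 2) + d (n - d - 1) = dn - binom(d+1, 2)`. -/

theorem IsCircuit.isCircuit {M : Matroid α} {C : Set α} (hC : _root_.IsCircuit M C) :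
    M.IsCircuit C := by
  obtain ⟨hCE, hdep, hmin⟩ := hC
  exact isCircuit_iff_dep_forall_sdiff_singleton_indep.2 ⟨⟨hdep, hCE⟩, hmin⟩

theorem Matroid.IsRkFinite.cast_nr_eq {M : Matroid α} {X : Set α} (hX : M.IsRkFinite X) :
    (nr M X : ℕ∞) = M.eRk X := by
  obtain ⟨I, hI, hIfin⟩ := hX.exists_finite_isBasis'
  have hub : I.ncard ∈ upperBounds {k | ∃ J, J ⊆ X ∧ M.Indep J ∧ J.ncard = k} := by
    rintro k ⟨J, hJX, hJ, rfl⟩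
    rw [← Nat.cast_le (α := ℕ∞), (hX.finite_of_indep_subset hJ hJX).cast_ncard_eq,
      hIfin.cast_ncard_eq, hI.encard_eq_eRk, ← hJ.eRk_eq_encard]
    exact M.eRk_mono hJX
  have hnr : nr M X = I.ncard := IsGreatest.csSup_eq ⟨⟨I, hI.subset, hI.indep, rfl⟩, hub⟩
  rw [hnr, hIfin.cast_ncard_eq, hI.encard_eq_eRk]

section RankFinite

variable {M : Matroid α} [M.RankFinite] {X Z : Set α}

theorem cast_nr_eq_eRk (X : Set α) : (nr M X : ℕ∞) = M.eRk X :=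
  (M.isRkFinite_set X).cast_nr_eq

theorem nr_le_ncard (hX : X.Finite) : nr M X ≤ X.ncard := by
  rw [← Nat.cast_le (α := ℕ∞), cast_nr_eq_eRk, hX.cast_ncard_eq]
  exact M.eRk_le_encard X

theorem nr_union_le_nr_add_ncard (hZ : Z.Finite) : nr M (X ∪ Z) ≤ nr M X + Z.ncard := by
  rw [← Nat.cast_le (α := ℕ∞), Nat.cast_add, cast_nr_eq_eRk, cast_nr_eq_eRk,
    hZ.cast_ncard_eq]
  exact M.eRk_union_le_eRk_add_encard X Z

theorem nr_le_nr_of_subset_closure (h : X ⊆ M.closure Z) : nr M X ≤ nr M Z := by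
  rw [← Nat.cast_le (α := ℕ∞), cast_nr_eq_eRk, cast_nr_eq_eRk, ← M.eRk_closure_eq Z]
  exact M.eRk_mono h

end RankFinite

section Edges

variable {V : Type*} {X Y W : Set V} {v b : V}

theorem edgesOn_mono (h : X ⊆ Y) : edgesOn X ⊆ edgesOn Y :=
  fun _ he => ⟨he.1, fun v hv => h (he.2 v hv)⟩

theorem mk_mem_edgesOn {a b : V} (hab : a ≠ b) (ha : a ∈ X) (hb : b ∈ X) :
    s(a, b) ∈ edgesOn X := by
  refine ⟨by simpa using hab, fun v hv => ?_⟩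
  rcases Sym2.mem_iff.mp hv with rfl | rfl <;> assumption

theorem exists_pair_of_mem_edgesOn {e : Sym2 V} (he : e ∈ edgesOn X) :
    ∃ a ∈ X, ∃ b ∈ X, a ≠ b ∧ e = s(a, b) := by
  induction e using Sym2.ind with
  | _ a b => exact ⟨a, he.2 a (Sym2.mem_mk_left a b), b, he.2 b (Sym2.mem_mk_right a b),
      by simpa using he.1, rfl⟩

theorem edgesOn_eq_image_offDiag (X : Set V) : edgesOn X = Sym2.mk.uncurry '' X.offDiag := by
  ext e
  constructor
  · intro he
    obtain ⟨a, ha, b, hb, hab, rfl⟩ := exists_pair_of_mem_edgesOn he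
    exact ⟨(a, b), ⟨ha, hb, hab⟩, rfl⟩
  · rintro ⟨⟨a, b⟩, ⟨ha, hb, hab⟩, rfl⟩
    exact mk_mem_edgesOn hab ha hb

theorem ncard_edgesOn (hX : X.Finite) : (edgesOn X).ncard = X.ncard.choose 2 := by
  classical
  obtain ⟨s, rfl⟩ := hX.exists_finset_coe
  rw [edgesOn_eq_image_offDiag, ← Finset.coe_offDiag, ← Finset.coe_image, ncard_coe_finset,
    ncard_coe_finset]
  exact Sym2.card_image_offDiag s

theorem edgesOn_insert_subset : edgesOn (insert v X) ⊆ edgesOn X ∪ (fun u => s(v, u)) '' X := by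
  intro e he
  obtain ⟨a, ha, b, hb, hab, rfl⟩ := exists_pair_of_mem_edgesOn he
  rcases eq_or_ne a v with rfl | hav
  · exact Or.inr ⟨b, hb.resolve_left hab.symm, rfl⟩
  rcases eq_or_ne b v with rfl | hbv
  · exact Or.inr ⟨a, ha.resolve_left hav, Sym2.eq_swap⟩
  · exact Or.inl (mk_mem_edgesOn hab (ha.resolve_left hav) (hb.resolve_left hbv))

theorem edgesOn_insert_insert_sdiff_subset :
    edgesOn (insert v (insert b W)) \ {s(v, b)} ⊆
      edgesOn (insert b W) ∪ (fun u => s(v, u)) '' W := by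
  rintro e ⟨he, hne⟩
  rcases edgesOn_insert_subset he with he | ⟨u, rfl | hu, rfl⟩
  · exact Or.inl he
  · exact absurd rfl hne
  · exact Or.inr ⟨u, hu, rfl⟩

end Edges

section CliqueCircuits

variable {V : Type*} {M : Matroid (Sym2 V)} {d : ℕ} {X Y W : Set V} {v b : V}

theorem edgesOn_subset_ground
    (hK : ∀ X : Set V, X.ncard = d + 2 → _root_.IsCircuit M (edgesOn X))
    (hX : d + 2 ≤ X.ncard) : edgesOn X ⊆ M.E := by
  intro e he
  obtain ⟨a, ha, b, hb, hab, rfl⟩ := exists_pair_of_mem_edgesOn he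
  obtain ⟨U, habU, hUX, hU⟩ := exists_subsuperset_card_eq (s := {a, b})
    (insert_subset ha (singleton_subset_iff.2 hb)) (by rw [ncard_pair hab]; omega) hX
  exact (hK U hU).1 (mk_mem_edgesOn hab (habU (mem_insert a _)) (habU (mem_insert_of_mem a rfl)))

theorem mk_mem_closure_edgesOn_union_image [Finite V]
    (hK : ∀ X : Set V, X.ncard = d + 2 → _root_.IsCircuit M (edgesOn X))
    (hvY : v ∉ Y) (hWY : W ⊆ Y) (hW : W.ncard = d) (hb : b ∈ Y \ W) :
    s(v, b) ∈ M.closure (edgesOn Y ∪ (fun u => s(v, u)) '' W) := by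
  have hvbW : v ∉ insert b W := by
    rintro (rfl | h)
    exacts [hvY hb.1, hvY (hWY h)]
  have hC := hK (insert v (insert b W)) (by
    rw [ncard_insert_of_notMem hvbW, ncard_insert_of_notMem hb.2, hW])
  have hvb : s(v, b) ∈ edgesOn (insert v (insert b W)) :=
    mk_mem_edgesOn (fun h => hvbW (h ▸ mem_insert b W)) (mem_insert _ _)
      (mem_insert_of_mem _ (mem_insert _ _))
  refine M.closure_subset_closure ?_ (hC.isCircuit.mem_closure_sdiff_singleton_of_mem hvb)
  exact edgesOn_insert_insert_sdiff_subset.trans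
    (union_subset_union_left _ (edgesOn_mono (insert_subset hb.1 hWY)))

theorem nr_edgesOn_insert_le [Finite V]
    (hK : ∀ X : Set V, X.ncard = d + 2 → _root_.IsCircuit M (edgesOn X))
    (hvY : v ∉ Y) (hY : d + 1 ≤ Y.ncard) :
    nr M (edgesOn (insert v Y)) ≤ nr M (edgesOn Y) + d := by
  obtain ⟨W, hWY, hW⟩ := exists_subset_card_eq (show d ≤ Y.ncard by omega)
  set S := (fun u => s(v, u)) '' W
  have hground : edgesOn (insert v Y) ⊆ M.E :=
    edgesOn_subset_ground hK (by rw [ncard_insert_of_notMem hvY]; omega)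
  have hSY : S ⊆ edgesOn (insert v Y) := by
    rintro _ ⟨u, hu, rfl⟩
    exact mk_mem_edgesOn (fun h => hvY (h ▸ hWY hu)) (mem_insert _ _)
      (mem_insert_of_mem _ (hWY hu))
  have hZ : edgesOn Y ∪ S ⊆ M.E :=
    (union_subset (edgesOn_mono (subset_insert v Y)) hSY).trans hground
  have hspan : edgesOn (insert v Y) ⊆ M.closure (edgesOn Y ∪ S) := by
    intro e he
    rcases edgesOn_insert_subset he with heY | ⟨b, hb, rfl⟩
    · exact M.subset_closure _ hZ (Or.inl heY)
    by_cases hbW : b ∈ W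
    · exact M.subset_closure _ hZ (Or.inr ⟨b, hbW, rfl⟩)
    · exact mk_mem_closure_edgesOn_union_image hK hvY hWY hW ⟨hb, hbW⟩
  calc nr M (edgesOn (insert v Y)) ≤ nr M (edgesOn Y ∪ S) := nr_le_nr_of_subset_closure hspan
    _ ≤ nr M (edgesOn Y) + S.ncard := nr_union_le_nr_add_ncard (toFinite S)
    _ ≤ nr M (edgesOn Y) + d := by
      have : S.ncard ≤ W.ncard := ncard_image_le (toFinite W)
      omega

theorem nr_edgesOn_add_choose_le [Finite V]
    (hK : ∀ X : Set V, X.ncard = d + 2 → _root_.IsCircuit M (edgesOn X))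
    (hX : d + 1 ≤ X.ncard) : nr M (edgesOn X) + (d + 1).choose 2 ≤ d * X.ncard := by
  obtain ⟨m, hm⟩ : ∃ m, X.ncard = m := ⟨_, rfl⟩
  rw [hm] at hX ⊢
  induction m, hX using Nat.le_induction generalizing X with
  | base =>
    have hchoose : (d + 1).choose 2 * 2 = (d + 1) * d := by
      simpa using (Nat.add_one_mul_choose_eq d 1).symm
    have : nr M (edgesOn X) ≤ (d + 1).choose 2 :=
      (nr_le_ncard (toFinite _)).trans_eq (by rw [ncard_edgesOn (toFinite X), hm])
    nlinarith
  | succ m hm' ih =>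
    obtain ⟨v, hv⟩ : X.Nonempty := nonempty_of_ncard_ne_zero (by omega)
    have hvY : v ∉ X \ {v} := fun h => h.2 rfl
    have hY : (X \ {v}).ncard = m := by rw [ncard_sdiff_singleton_of_mem hv, hm]; rfl
    have hstep := nr_edgesOn_insert_le hK hvY (d := d) (by omega)
    rw [insert_sdiff_singleton, insert_eq_of_mem hv] at hstep
    have := ih hY
    rw [Nat.mul_succ]
    omega

end CliqueCircuits

/-- Any matroid on `E(K_n)` (`n ≥ d+2`) in which the edge set of every
copy of `K_{d+2}` is a circuit has rank at most `dn − (d+1 choose 2)`. -/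
theorem rank_le_of_Kd2_matroid (n d : ℕ) (hn : d + 2 ≤ n)
    (M : Matroid (Sym2 (Fin n))) (hE : M.E = edgesOn (univ : Set (Fin n)))
    (hK : ∀ X : Set (Fin n), X.ncard = d + 2 → _root_.IsCircuit M (edgesOn X)) :
    mrk M + Nat.choose (d + 1) 2 ≤ d * n := by
  have hcard : (univ : Set (Fin n)).ncard = n := by rw [ncard_univ, Nat.card_fin]
  have := nr_edgesOn_add_choose_le hK (X := univ) (by omega)
  rwa [hcard, ← hE] at this
end

section
/- Let M be a matroid defined on the edge set of a graph G = (V, E) such that every circuit of M induces a 2-connected subgraph of G, and let X ⊆ E be a connected set in M with vertex set V(X). Then Σ_{v ∈ V(X)} min{ d_B(v) : B a base of M|_X } ≤ 2(r(X) + 1) − |V(X)|. -/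
open Set Matroid

variable {α : Type*}

/-- The subgraph of `G` induced by an edge set `C` is 2-connected: it has at least three
vertices, is connected, and deleting any single vertex leaves it connected. -/
def TwoConnEdges {V : Type*} (C : Set (Sym2 V)) : Prop :=
  3 ≤ (verts C).ncard ∧
  (∀ a ∈ verts C, ∀ b ∈ verts C, (SimpleGraph.fromEdgeSet C).Reachable a b) ∧
  ∀ v ∈ verts C, ∀ a ∈ verts C \ {v}, ∀ b ∈ verts C \ {v},
    (SimpleGraph.fromEdgeSet {e ∈ C | v ∉ e}).Reachable a b

/-- A set `X` is connected in a matroid `M`: `X` is nonempty and every two distinct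
elements of `X` lie in a common circuit of `M` contained in `X`. -/
def MConnected (M : Matroid α) (X : Set α) : Prop :=
  X.Nonempty ∧ ∀ e ∈ X, ∀ f ∈ X, e ≠ f →
    ∃ C, _root_.IsCircuit M C ∧ C ⊆ X ∧ e ∈ C ∧ f ∈ C

/-!
Grow the connected set `X` from a single edge by ears: circuits `C` that meet the current set `Y`
and leave it with as few new elements `D = C \ Y` as possible. Minimality makes `B ∪ (D - γ)` a
basis of `Y ∪ C` for every basis `B` of `Y` and every `γ ∈ D`, so the rank grows by `|D| - 1`, and
taking `γ` at a vertex `v` of `D` raises the minimal basis degree at `v` by at most `d_D(v) - 1`.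
By the handshake identity this costs `2|D| - |V(D)|` in total, while 2-connectivity of `C` makes
`V(D)` share at least two vertices with `V(Y)`, so at most `|V(D)| - 2` vertices are new.
-/

theorem isCircuit_iff_matroidIsCircuit {M : Matroid α} {C : Set α} :
    _root_.IsCircuit M C ↔ M.IsCircuit C := by
  rw [isCircuit_iff_dep_forall_sdiff_singleton_indep, Dep, _root_.IsCircuit]
  tauto

theorem nr_eq_ncard_of_isBasis [Finite α] {M : Matroid α} {B X : Set α} (hB : M.IsBasis B X) :
    nr M X = B.ncard := by
  have hle : ∀ k ∈ {k | ∃ I, I ⊆ X ∧ M.Indep I ∧ I.ncard = k}, k ≤ B.ncard := by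
    rintro k ⟨I, hIX, hI, rfl⟩
    obtain ⟨J, hJ, hIJ⟩ := hI.subset_isBasis_of_subset hIX hB.subset_ground
    rw [ncard_def B, ← hJ.encard_eq_encard hB, ← ncard_def]
    exact ncard_le_ncard hIJ J.toFinite
  exact le_antisymm (csSup_le ⟨_, B, hB.subset, hB.indep, rfl⟩ hle)
    (le_csSup ⟨_, hle⟩ ⟨B, hB.subset, hB.indep, rfl⟩)

structure IsEar (M : Matroid α) (Y C : Set α) : Prop where
  isCircuit : M.IsCircuit C
  inter_nonempty : (C ∩ Y).Nonempty
  diff_nonempty : (C \ Y).Nonempty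
  ncard_diff_le : ∀ ⦃C'⦄, M.IsCircuit C' → C' ⊆ Y ∪ C → (C' ∩ Y).Nonempty → (C' \ Y).Nonempty →
    (C \ Y).ncard ≤ (C' \ Y).ncard

namespace IsEar

variable {M : Matroid α} {Y C B : Set α} {γ : α}

theorem union_subset_closure (hC : IsEar M Y C) (hB : M.IsBasis B Y) :
    Y ∪ C ⊆ M.closure (B ∪ ((C \ Y) \ {γ})) := by
  have hY : Y ⊆ M.closure (B ∪ ((C \ Y) \ {γ})) :=
    hB.subset_closure.trans (M.closure_subset_closure subset_union_left)
  have hCγ : C \ {γ} ⊆ M.closure (B ∪ ((C \ Y) \ {γ})) := fun x hx ↦ by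
    by_cases hxY : x ∈ Y
    · exact hY hxY
    · exact M.mem_closure_of_mem' (Or.inr ⟨⟨hx.1, hxY⟩, hx.2⟩)
        (hC.isCircuit.subset_ground hx.1)
  exact union_subset hY ((hC.isCircuit.subset_closure_sdiff_singleton γ).trans
    (M.closure_subset_closure_of_subset_closure hCγ))

variable [Finite α]

/-- A circuit inside `B ∪ ((C \ Y) \ {γ})` would be an ear of `Y` with fewer new elements. -/
theorem indep_union (hC : IsEar M Y C) (hB : M.IsBasis B Y) (hγ : γ ∈ C \ Y) :
    M.Indep (B ∪ ((C \ Y) \ {γ})) := by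
  by_contra hdep
  have hE : B ∪ ((C \ Y) \ {γ}) ⊆ M.E :=
    union_subset hB.indep.subset_ground
      ((sdiff_subset.trans sdiff_subset).trans hC.isCircuit.subset_ground)
  obtain ⟨C', hC'sub, hC'⟩ := (show M.Dep _ from ⟨hdep, hE⟩).exists_isCircuit_subset
  have hC'Y : C' \ Y ⊆ (C \ Y) \ {γ} := fun x hx ↦
    (hC'sub hx.1).resolve_left fun h ↦ hx.2 (hB.subset h)
  have hmeets : (C' ∩ Y).Nonempty := by
    by_contra h
    refine hC'.not_indep ((hC.isCircuit.sdiff_singleton_indep hγ.1).subset fun x hx ↦ ?_)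
    obtain ⟨⟨hxC, -⟩, hxγ⟩ := hC'Y ⟨hx, fun hxY ↦ h ⟨x, hx, hxY⟩⟩
    exact ⟨hxC, hxγ⟩
  have hleaves : (C' \ Y).Nonempty := by
    by_contra h
    refine hC'.not_indep (hB.indep.subset fun x hx ↦ ?_)
    exact (hC'sub hx).resolve_right fun hx' ↦ h ⟨x, hx, hx'.1.2⟩
  have hmin := hC.ncard_diff_le hC'
    (hC'sub.trans (union_subset_union hB.subset (sdiff_subset.trans sdiff_subset))) hmeets hleaves
  have := ncard_le_ncard hC'Y (toFinite _)
  have := ncard_sdiff_singleton_lt_of_mem hγ (toFinite (C \ Y))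
  omega

theorem isBasis_union (hC : IsEar M Y C) (hB : M.IsBasis B Y) (hγ : γ ∈ C \ Y) :
    M.IsBasis (B ∪ ((C \ Y) \ {γ})) (Y ∪ C) :=
  (hC.indep_union hB hγ).isBasis_of_subset_of_subset_closure
    (union_subset_union hB.subset (sdiff_subset.trans sdiff_subset)) (hC.union_subset_closure hB)

theorem nr_union_add_one (hC : IsEar M Y C) (hY : Y ⊆ M.E) :
    nr M (Y ∪ C) + 1 = nr M Y + (C \ Y).ncard := by
  obtain ⟨B, hB⟩ := M.exists_isBasis Y
  obtain ⟨γ, hγ⟩ := hC.diff_nonempty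
  have hdisj : Disjoint B ((C \ Y) \ {γ}) :=
    (disjoint_sdiff_right.mono_left hB.subset).mono_right sdiff_subset
  rw [nr_eq_ncard_of_isBasis (hC.isBasis_union hB hγ), nr_eq_ncard_of_isBasis hB,
    ncard_union_eq hdisj, add_assoc, ncard_sdiff_singleton_add_one hγ]

end IsEar

namespace MConnected

variable [Finite α] {M : Matroid α} {X Z : Set α}

theorem exists_isEar (hX : MConnected M X) (hZX : Z ⊆ X) (hZ : Z.Nonempty) (hne : Z ≠ X) :
    ∃ C ⊆ X, IsEar M Z C := by
  obtain ⟨f, hfX, hfZ⟩ := exists_of_ssubset (hZX.ssubset_of_ne hne)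
  obtain ⟨e, heZ⟩ := hZ
  obtain ⟨C₁, hC₁, hC₁X, heC₁, hfC₁⟩ := hX.2 e (hZX heZ) f hfX (ne_of_mem_of_not_mem heZ hfZ)
  obtain ⟨C, ⟨hC, hCX, hmeets, hleaves⟩, hmin⟩ := exists_min_image
    {C | M.IsCircuit C ∧ C ⊆ X ∧ (C ∩ Z).Nonempty ∧ (C \ Z).Nonempty} (fun C ↦ (C \ Z).ncard)
    (toFinite _)
    ⟨C₁, isCircuit_iff_matroidIsCircuit.1 hC₁, hC₁X, ⟨e, heC₁, heZ⟩, ⟨f, hfC₁, hfZ⟩⟩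
  exact ⟨C, hCX, hC, hmeets, hleaves, fun C' hC' hC'sub hmeets' hleaves' ↦
    hmin C' ⟨hC', hC'sub.trans (union_subset hZX hCX), hmeets', hleaves'⟩⟩

theorem induction_on_ears {P : Set α → Prop} (hX : MConnected M X) (hZX : Z ⊆ X)
    (hZ : Z.Nonempty) (hPZ : P Z) (step : ∀ ⦃Y C⦄, Y ⊆ X → IsEar M Y C → P Y → P (Y ∪ C)) :
    P X := by
  induction hn : (X \ Z).ncard using Nat.strong_induction_on generalizing Z with
  | _ n ih =>
  obtain rfl | hne := eq_or_ne Z X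
  · exact hPZ
  obtain ⟨C, hCX, hC⟩ := hX.exists_isEar hZX hZ hne
  refine ih _ ?_ (union_subset hZX hCX) (hZ.mono subset_union_left) (step hZX hC hPZ) rfl
  obtain ⟨g, hgC, hgZ⟩ := hC.diff_nonempty
  rw [← hn]
  exact ncard_lt_ncard ((ssubset_iff_of_subset (sdiff_subset_sdiff_right subset_union_left)).2
    ⟨g, ⟨hCX hgC, hgZ⟩, fun h ↦ h.2 (Or.inr hgC)⟩)

end MConnected

section Graph

variable {V : Type*}

theorem verts_mono {F G : Set (Sym2 V)} (h : F ⊆ G) : verts F ⊆ verts G :=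
  fun _ ⟨e, he, hv⟩ ↦ ⟨e, h he, hv⟩

theorem verts_union (F G : Set (Sym2 V)) : verts (F ∪ G) = verts F ∪ verts G := by
  ext v
  simp only [verts, mem_union, mem_ofPred_eq, or_and_right, exists_or]

theorem ncard_verts_singleton {e : Sym2 V} (he : ¬ e.IsDiag) : (verts {e}).ncard = 2 := by
  induction e using Sym2.ind with
  | _ a b =>
  have hvs : verts {s(a, b)} = {a, b} := by
    ext v
    simp [verts, eq_comm]
  rw [hvs, ncard_pair (by simpa using he)]

theorem exists_mem_ne_of_not_isDiag {e : Sym2 V} (he : ¬ e.IsDiag) (x : V) : ∃ a ∈ e, a ≠ x := by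
  induction e using Sym2.ind with
  | _ a b =>
  by_cases hax : a = x
  · exact ⟨b, Sym2.mem_mk_right a b, fun hbx ↦ he (by simp [hax, hbx])⟩
  · exact ⟨a, Sym2.mem_mk_left a b, hax⟩

theorem edeg_mono [Finite V] {F G : Set (Sym2 V)} (h : F ⊆ G) (v : V) : edeg F v ≤ edeg G v :=
  ncard_le_ncard (fun _ he ↦ ⟨h he.1, he.2⟩) (toFinite _)

theorem edeg_union_of_disjoint [Finite V] {F G : Set (Sym2 V)} (h : Disjoint F G) (v : V) :
    edeg (F ∪ G) v = edeg F v + edeg G v := by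
  rw [edeg, edeg, edeg, ← ncard_union_eq (h.mono (sep_subset _ _) (sep_subset _ _))]
  congr 1
  ext e
  simp only [mem_ofPred_eq, mem_union, or_and_right]

theorem edeg_sdiff_singleton_add_one [Finite V] {F : Set (Sym2 V)} {e : Sym2 V} {v : V}
    (he : e ∈ F) (hv : v ∈ e) : edeg (F \ {e}) v + 1 = edeg F v := by
  have hsep : {f ∈ F \ {e} | v ∈ f} = {f ∈ F | v ∈ f} \ {e} := by
    ext f
    simp only [mem_sdiff, mem_ofPred_eq, mem_singleton_iff]
    tauto
  rw [edeg, edeg, hsep, ncard_sdiff_singleton_add_one (show e ∈ {f ∈ F | v ∈ f} from ⟨he, hv⟩)]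

theorem sum_edeg_eq_two_mul_ncard [Fintype V] {F : Set (Sym2 V)} (hF : ∀ e ∈ F, ¬ e.IsDiag) :
    ∑ v, edeg F v = 2 * F.ncard := by
  classical
  calc ∑ v, edeg F v = ∑ v, ∑ e ∈ F.toFinset, if v ∈ e then 1 else 0 := by
        refine Finset.sum_congr rfl fun v _ ↦ ?_
        rw [edeg, ncard_eq_toFinset_card', Finset.sum_boole, Nat.cast_id]
        exact congrArg Finset.card (by ext; simp)
    _ = ∑ e ∈ F.toFinset, e.toFinset.card := by
        rw [Finset.sum_comm]
        refine Finset.sum_congr rfl fun e _ ↦ ?_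
        rw [Finset.sum_boole, Nat.cast_id]
        exact congrArg Finset.card (by ext; simp)
    _ = 2 * F.ncard := by
        rw [Finset.sum_congr rfl fun e he ↦ Sym2.card_toFinset_of_not_isDiag e
          (hF e (mem_toFinset.1 he)), Finset.sum_const, smul_eq_mul, ncard_eq_toFinset_card',
          mul_comm]

end Graph

theorem TwoConnEdges.two_le_ncard_verts_inter {V : Type*} [Finite V] {C P : Set (Sym2 V)}
    (hC : TwoConnEdges C) (hCd : ∀ e ∈ C, ¬ e.IsDiag) (hPC : P ⊆ C) (hP : P.Nonempty)
    (hQ : (C \ P).Nonempty) : 2 ≤ (verts P ∩ verts (C \ P)).ncard := by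
  by_contra! hlt
  obtain ⟨p, hp⟩ := hP
  obtain ⟨q, hq⟩ := hQ
  obtain ⟨x, hxC, hsub⟩ : ∃ x ∈ verts C, verts P ∩ verts (C \ P) ⊆ {x} := by
    obtain h | ⟨x, hx⟩ := (ncard_le_one_iff_eq (toFinite _)).1 (Nat.le_of_lt_succ hlt)
    · exact ⟨_, ⟨p, hPC hp, p.out_fst_mem⟩, h.subset.trans (empty_subset _)⟩
    · exact ⟨x, verts_mono hPC (hx.symm.subset rfl).1, hx.subset⟩
  obtain ⟨a, hap, hax⟩ := exists_mem_ne_of_not_isDiag (hCd p (hPC hp)) x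
  obtain ⟨b, hbq, hbx⟩ := exists_mem_ne_of_not_isDiag (hCd q hq.1) x
  obtain ⟨walk⟩ := hC.2.2 x hxC a ⟨⟨p, hPC hp, hap⟩, hax⟩ b ⟨⟨q, hq.1, hbq⟩, hbx⟩
  -- an edge of the walk leaving `V(P) \ {x}` has an end `≠ x` in both `V(P)` and `V(C \ P)`
  obtain ⟨d, -, hd₁, hd₂⟩ := walk.exists_boundary_dart (verts P \ {x}) ⟨⟨p, hp, hap⟩, hax⟩
    fun hb ↦ hbx (hsub ⟨hb.1, q, hq, hbq⟩)
  obtain ⟨⟨hdC, hxd⟩, -⟩ := (SimpleGraph.fromEdgeSet_adj _).1 d.adj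
  by_cases hdP : s(d.fst, d.snd) ∈ P
  · refine hd₂ ⟨⟨_, hdP, Sym2.mem_mk_right _ _⟩, fun h ↦ hxd ?_⟩
    exact Sym2.mem_iff.2 (Or.inr (mem_singleton_iff.1 h).symm)
  · exact hd₁.2 (hsub ⟨hd₁.1, _, ⟨hdC, hdP⟩, Sym2.mem_mk_left _ _⟩)

section MinBasisDeg

variable {V : Type*} {M : Matroid (Sym2 V)} {X Y C B : Set (Sym2 V)}

noncomputable def minBasisDeg (M : Matroid (Sym2 V)) (X : Set (Sym2 V)) (v : V) : ℕ :=
  sInf {k | ∃ B, M.IsBasis B X ∧ k = edeg B v}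

theorem minBasisDeg_le (hB : M.IsBasis B X) (v : V) : minBasisDeg M X v ≤ edeg B v :=
  Nat.sInf_le ⟨B, hB, rfl⟩

theorem exists_isBasis_edeg_eq_minBasisDeg (hX : X ⊆ M.E) (v : V) :
    ∃ B, M.IsBasis B X ∧ edeg B v = minBasisDeg M X v := by
  obtain ⟨B, hB⟩ := M.exists_isBasis X
  obtain ⟨B', hB', h⟩ := Nat.sInf_mem (s := {k | ∃ B, M.IsBasis B X ∧ k = edeg B v}) ⟨_, B, hB, rfl⟩
  exact ⟨B', hB', h.symm⟩

variable [Fintype V]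

theorem sum_minBasisDeg_le (hB : M.IsBasis B X) (hBd : ∀ e ∈ B, ¬ e.IsDiag) :
    ∑ v, minBasisDeg M X v ≤ 2 * B.ncard :=
  (Finset.sum_le_sum fun v _ ↦ minBasisDeg_le hB v).trans (sum_edeg_eq_two_mul_ncard hBd).le

theorem sum_minBasisDeg_singleton_add_ncard_verts_le {e : Sym2 V} (he : ¬ e.IsDiag)
    (hind : M.Indep {e}) :
    ∑ v, minBasisDeg M {e} v + (verts {e}).ncard ≤ 2 * (nr M {e} + 1) := by
  have hB : M.IsBasis {e} {e} := hind.isBasis_self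
  have hsum := sum_minBasisDeg_le hB (by simpa)
  rw [nr_eq_ncard_of_isBasis hB, ncard_verts_singleton he, ncard_singleton]
  rw [ncard_singleton] at hsum
  omega

theorem IsEar.minBasisDeg_union_le (hC : IsEar M Y C) (hY : Y ⊆ M.E) {γ : Sym2 V}
    (hγ : γ ∈ C \ Y) (v : V) :
    minBasisDeg M (Y ∪ C) v ≤ minBasisDeg M Y v + edeg ((C \ Y) \ {γ}) v := by
  obtain ⟨B, hB, hBv⟩ := exists_isBasis_edeg_eq_minBasisDeg hY v
  have hdisj : Disjoint B ((C \ Y) \ {γ}) :=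
    (disjoint_sdiff_right.mono_left hB.subset).mono_right sdiff_subset
  calc minBasisDeg M (Y ∪ C) v ≤ edeg (B ∪ ((C \ Y) \ {γ})) v :=
        minBasisDeg_le (hC.isBasis_union hB hγ) v
    _ = minBasisDeg M Y v + edeg ((C \ Y) \ {γ}) v := by rw [edeg_union_of_disjoint hdisj, hBv]

theorem IsEar.sum_minBasisDeg_union_add_ncard_verts_le (hC : IsEar M Y C) (hY : Y ⊆ M.E)
    (hCd : ∀ e ∈ C, ¬ e.IsDiag) :
    ∑ v, minBasisDeg M (Y ∪ C) v + (verts (C \ Y)).ncard ≤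
      ∑ v, minBasisDeg M Y v + 2 * (C \ Y).ncard := by
  classical
  have hpointwise : ∀ v, minBasisDeg M (Y ∪ C) v + (if v ∈ verts (C \ Y) then 1 else 0) ≤
      minBasisDeg M Y v + edeg (C \ Y) v := by
    intro v
    split_ifs with hv
    · obtain ⟨γ, hγ, hvγ⟩ := hv
      have := hC.minBasisDeg_union_le hY hγ v
      have := edeg_sdiff_singleton_add_one hγ hvγ
      omega
    · obtain ⟨γ, hγ⟩ := hC.diff_nonempty
      exact (hC.minBasisDeg_union_le hY hγ v).trans (by gcongr; exact edeg_mono sdiff_subset v)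
  have hverts : (verts (C \ Y)).ncard = ∑ v, if v ∈ verts (C \ Y) then 1 else 0 := by
    rw [ncard_eq_toFinset_card', Finset.sum_boole, Nat.cast_id]
    exact congrArg Finset.card (by ext; simp)
  rw [hverts, ← sum_edeg_eq_two_mul_ncard fun e he ↦ hCd e he.1, ← Finset.sum_add_distrib,
    ← Finset.sum_add_distrib]
  exact Finset.sum_le_sum fun v _ ↦ hpointwise v

theorem IsEar.sum_minBasisDeg_add_ncard_verts_le (hC : IsEar M Y C) (hY : Y ⊆ M.E)
    (h2c : TwoConnEdges C) (hCd : ∀ e ∈ C, ¬ e.IsDiag)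
    (ih : ∑ v, minBasisDeg M Y v + (verts Y).ncard ≤ 2 * (nr M Y + 1)) :
    ∑ v, minBasisDeg M (Y ∪ C) v + (verts (Y ∪ C)).ncard ≤ 2 * (nr M (Y ∪ C) + 1) := by
  have hsum := hC.sum_minBasisDeg_union_add_ncard_verts_le hY hCd
  have hrank := hC.nr_union_add_one hY
  have hshared : 2 ≤ (verts Y ∩ verts (C \ Y)).ncard := by
    have h := h2c.two_le_ncard_verts_inter hCd inter_subset_left hC.inter_nonempty
      (by rw [sdiff_self_inter]; exact hC.diff_nonempty)
    rw [sdiff_self_inter] at h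
    exact h.trans (ncard_le_ncard (inter_subset_inter_left _ (verts_mono inter_subset_right)))
  have hverts : (verts (Y ∪ C)).ncard + (verts Y ∩ verts (C \ Y)).ncard =
      (verts Y).ncard + (verts (C \ Y)).ncard := by
    rw [← union_sdiff_self, verts_union]
    exact ncard_union_add_ncard_inter _ _
  omega

end MinBasisDeg

theorem indep_singleton_of_twoConnEdges {V : Type*} {M : Matroid (Sym2 V)}
    (h2c : ∀ C, M.IsCircuit C → TwoConnEdges C) {e : Sym2 V} (he : ¬ e.IsDiag) (heE : e ∈ M.E) :
    M.Indep {e} := by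
  obtain hloop | hnonloop := M.isLoop_or_isNonloop e heE
  · have := (h2c {e} hloop.isCircuit).1
    rw [ncard_verts_singleton he] at this
    omega
  · exact hnonloop.indep

/-- Let `M` be a matroid on the edge set of a graph `G` in which every
circuit induces a 2-connected subgraph, and let `X` be a connected set in `M`. Then
`Σ_{v ∈ V(X)} min{d_B(v) : B a base of X} ≤ 2(r(X)+1) − |V(X)|`. -/
theorem sum_min_degree_le {V : Type*} [Fintype V] (EG : Set (Sym2 V))
    (hEG : ∀ e ∈ EG, ¬ e.IsDiag)
    (M : Matroid (Sym2 V)) (hE : M.E = EG)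
    (h2c : ∀ C, _root_.IsCircuit M C → TwoConnEdges C)
    (X : Set (Sym2 V)) (hX : X ⊆ EG) (hconn : MConnected M X) :
    (∑ᶠ v ∈ verts X, sInf {k | ∃ B, M.IsBasis B X ∧ k = edeg B v}) + (verts X).ncard
      ≤ 2 * (nr M X + 1) := by
  change (∑ᶠ v ∈ verts X, minBasisDeg M X v) + _ ≤ _
  subst hE
  have h2c' : ∀ C, M.IsCircuit C → TwoConnEdges C :=
    fun C hC ↦ h2c C (isCircuit_iff_matroidIsCircuit.2 hC)
  obtain ⟨e, he⟩ := hconn.1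
  have hbound : ∑ v, minBasisDeg M X v + (verts X).ncard ≤ 2 * (nr M X + 1) :=
    hconn.induction_on_ears (singleton_subset_iff.2 he) (singleton_nonempty e)
      (sum_minBasisDeg_singleton_add_ncard_verts_le (hEG e (hX he))
        (indep_singleton_of_twoConnEdges h2c' (hEG e (hX he)) (hX he)))
      fun Y C hYX hC ih ↦ hC.sum_minBasisDeg_add_ncard_verts_le (hYX.trans hX)
        (h2c' C hC.isCircuit) (fun f hf ↦ hEG f (hC.isCircuit.subset_ground hf)) ih
  have hfinsum : ∑ᶠ v ∈ verts X, minBasisDeg M X v ≤ ∑ v, minBasisDeg M X v := by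
    classical
    rw [finsum_mem_eq_toFinset_sum]
    exact Finset.sum_le_sum_of_subset (Finset.subset_univ _)
  omega
end
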